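/- arXiv:2212.11580 — 2 statements merged into one kernel-verified Lean document; each statement's English description precedes it below -/
import Mathlib

section
/- The conversion closure C* of a unit conversion C forms an invertible category with units as objects and conversion factors as morphisms: (identity) for every unit u, u →1 u in C*; (composition) if u →r v and v →s w in C* then u →(r·s) w in C*; (inversion) if u →r v in C* then v →(r⁻¹) u in C*. -/
open Finsupp

/-- The positive rationals, as a multiplicative group. -/
abbrev Ratio : Type := {q : ℚ // 0 < q}

/-- Prefixes: the free abelian group over base prefixes `P`. -/
abbrev PrefG (P : Type*) : Type _ := P →₀ ℤ
/-- Root units: the free abelian group over base units `B`. -/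
abbrev RootG (B : Type*) : Type _ := B →₀ ℤ
/-- Units: the free abelian group over preunits (prefix, base unit). -/
abbrev UnitG (P B : Type*) : Type _ := ((P →₀ ℤ) × B) →₀ ℤ

variable {P B D : Type*}

/-- The root of a unit: forget all prefixes. -/
noncomputable def rootU (u : UnitG P B) : RootG B :=
  Finsupp.mapDomain Prod.snd u

/-- Embed a root unit back into the units, with empty prefixes. -/
noncomputable def unrootU (f : RootG B) : UnitG P B :=
  Finsupp.mapDomain (fun b => ((0 : PrefG P), b)) f

/-- Strip all prefixes from a unit. -/
noncomputable def stripU (u : UnitG P B) : UnitG P B := unrootU (rootU u)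

/-- The value of a prefix, given values of base prefixes. -/
noncomputable def valP (val₀ : P → Ratio) (f : PrefG P) : Ratio :=
  ∏ p ∈ f.support, val₀ p ^ (f p)

/-- The prefix value of a unit. -/
noncomputable def pvalU (val₀ : P → Ratio) (g : UnitG P B) : Ratio :=
  ∏ x ∈ g.support, valP val₀ x.1 ^ (g x)

/-- The dimension of a root unit, given dimensions of base units. -/
noncomputable def dimRoot (dim₀ : B → D →₀ ℤ) (f : RootG B) : D →₀ ℤ :=
  ∑ b ∈ f.support, f b • dim₀ b

/-- The dimension of a unit. -/
noncomputable def dimU (dim₀ : B → D →₀ ℤ) (u : UnitG P B) : D →₀ ℤ :=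
  dimRoot dim₀ (rootU u)

/-- The combined prefix of a unit. -/
noncomputable def prefU (u : UnitG P B) : PrefG P :=
  ∑ x ∈ u.support, u x • x.1

/-- Normalization of a unit. -/
noncomputable def normU (u : UnitG P B) : PrefG P × RootG B :=
  (prefU u, rootU u)

/-- Evaluation of a unit. -/
noncomputable def evalU (val₀ : P → Ratio) (u : UnitG P B) : Ratio × RootG B :=
  (pvalU val₀ u, rootU u)

/-- A unit conversion: dimensionally consistent and functional in the ratio. -/
def IsConversion (dim₀ : B → D →₀ ℤ) (C : Set (UnitG P B × Ratio × UnitG P B)) : Prop :=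
  (∀ u r v, (u, r, v) ∈ C → dimU dim₀ u = dimU dim₀ v) ∧
  (∀ u r r' v, (u, r, v) ∈ C → (u, r', v) ∈ C → r = r')

/-- The closure rules for unit conversions. -/
inductive ClosureRel {P B : Type*} (val₀ : P → Ratio)
    (C : Set (UnitG P B × Ratio × UnitG P B)) :
    UnitG P B → Ratio → UnitG P B → Prop
  | base {u r v} : (u, r, v) ∈ C → ClosureRel val₀ C u r v
  | mul {u r v u' r' v'} : ClosureRel val₀ C u r v → ClosureRel val₀ C u' r' v' →
      ClosureRel val₀ C (u + u') (r * r') (v + v')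
  | inv {u r v} : ClosureRel val₀ C u r v → ClosureRel val₀ C (-u) r⁻¹ (-v)
  | pe (u : UnitG P B) : ClosureRel val₀ C u (pvalU val₀ u) (stripU u)
  | pe' (u : UnitG P B) : ClosureRel val₀ C (stripU u) (pvalU val₀ u)⁻¹ u

/-- The conversion closure: the smallest relation containing `C` closed under the rules. -/
def convClosure (val₀ : P → Ratio) (C : Set (UnitG P B × Ratio × UnitG P B)) :
    Set (UnitG P B × Ratio × UnitG P B) :=
  {t | ClosureRel val₀ C t.1 t.2.1 t.2.2}

/-- Convertibility with respect to a conversion. -/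
def Convertible (C : Set (UnitG P B × Ratio × UnitG P B)) (u v : UnitG P B) : Prop :=
  ∃ r, (u, r, v) ∈ C

/-- Coherence with respect to a conversion. -/
def Coherent (C : Set (UnitG P B × Ratio × UnitG P B)) (u v : UnitG P B) : Prop :=
  (u, (1 : Ratio), v) ∈ C

/-- The unit `δu₀` corresponding to a base unit. -/
noncomputable def deltaB (P : Type*) {B : Type*} (u₀ : B) : UnitG P B :=
  Finsupp.single ((0 : PrefG P), u₀) 1

/-- A defining conversion: basic and functional in its first component. -/
def IsDefining (C : Set (UnitG P B × Ratio × UnitG P B)) : Prop :=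
  (∀ u r v, (u, r, v) ∈ C → ∃ u₀ : B, u = deltaB P u₀) ∧
  (∀ u r v r' v', (u, r, v) ∈ C → (u, r', v') ∈ C → v = v')

/-- One-step dependency between base units. -/
def Depends (C : Set (UnitG P B × Ratio × UnitG P B)) (u₀ v₀ : B) : Prop :=
  ∃ r v, (deltaB P u₀, r, v) ∈ C ∧ v₀ ∈ (rootU v).support

/-- The dependency order `>_C`. -/
def DepOrd (C : Set (UnitG P B × Ratio × UnitG P B)) : B → B → Prop :=
  Relation.TransGen (Depends C)

/-- The domain of a defining conversion. -/
def domC (C : Set (UnitG P B × Ratio × UnitG P B)) : Set B :=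
  {u₀ : B | ∃ r v, (deltaB P u₀, r, v) ∈ C}


/-- Definition expansion. -/
noncomputable def xpd (C : Set (UnitG P B × Ratio × UnitG P B)) (u₀ : B) :
    Ratio × UnitG P B :=
  haveI := Classical.propDecidable (∃ rv : Ratio × UnitG P B, (deltaB P u₀, rv.1, rv.2) ∈ C)
  if h : ∃ rv : Ratio × UnitG P B, (deltaB P u₀, rv.1, rv.2) ∈ C then h.choose
  else (1, deltaB P u₀)

/-- The base rewriting map. -/
noncomputable def rwrB (val₀ : P → Ratio) (C : Set (UnitG P B × Ratio × UnitG P B))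
    (u₀ : B) : Ratio × RootG B :=
  ((xpd C u₀).1 * pvalU val₀ (xpd C u₀).2, rootU (xpd C u₀).2)

/-- One rewriting step on evaluated units. -/
noncomputable def rwrStep (val₀ : P → Ratio) (C : Set (UnitG P B × Ratio × UnitG P B)) :
    Ratio × RootG B → Ratio × RootG B :=
  fun p => (p.1 * ∏ b ∈ p.2.support, (rwrB val₀ C b).1 ^ (p.2 b),
            ∑ b ∈ p.2.support, p.2 b • (rwrB val₀ C b).2)



section Helpers

variable {P B : Type*}

lemma rootU_unrootU (f : RootG B) : rootU (unrootU (P := P) f) = f := by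
  unfold rootU unrootU
  rw [← Finsupp.mapDomain_comp]
  exact Finsupp.mapDomain_id

lemma stripU_stripU (u : UnitG P B) : stripU (stripU u) = stripU u := by
  unfold stripU
  rw [rootU_unrootU]

lemma mapDomain_neg' {α β : Type*} (f : α → β) (g : α →₀ ℤ) :
    Finsupp.mapDomain f (-g) = -Finsupp.mapDomain f g :=
  map_neg (Finsupp.mapDomain.addMonoidHom f) g

lemma stripU_neg (u : UnitG P B) : stripU (-u) = -(stripU u) := by
  unfold stripU unrootU rootU
  rw [mapDomain_neg', mapDomain_neg']

lemma valP_zero (val₀ : P → Ratio) : valP val₀ (0 : PrefG P) = 1 := by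
  simp [valP]

lemma pvalU_stripU (val₀ : P → Ratio) (u : UnitG P B) :
    pvalU val₀ (stripU u) = 1 := by
  unfold pvalU
  apply Finset.prod_eq_one
  intro x hx
  classical
  have hsub := Finsupp.mapDomain_support (f := fun b => ((0 : PrefG P), b))
    (s := rootU u)
  have hx' := hsub hx
  simp only [Finset.mem_image] at hx'
  obtain ⟨b, -, rfl⟩ := hx'
  have : valP val₀ ((((0 : PrefG P), b) : (P →₀ ℤ) × B).1) = 1 := valP_zero val₀
  rw [this]
  ext
  rw [Positive.coe_zpow]
  norm_num

lemma ClosureRel.cast {val₀ : P → Ratio} {C : Set (UnitG P B × Ratio × UnitG P B)}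
    {u u' v v' : UnitG P B} {r r' : Ratio}
    (h : ClosureRel val₀ C u r v) (hu : u = u') (hr : r = r') (hv : v = v') :
    ClosureRel val₀ C u' r' v' := by
  subst hu; subst hr; subst hv; exact h

lemma ClosureRel.loop (val₀ : P → Ratio) (C : Set (UnitG P B × Ratio × UnitG P B))
    (u : UnitG P B) : ClosureRel val₀ C (stripU u) 1 (stripU u) :=
  (ClosureRel.pe (stripU u)).cast rfl (pvalU_stripU val₀ u) (stripU_stripU u)

lemma ClosureRel.id (val₀ : P → Ratio) (C : Set (UnitG P B × Ratio × UnitG P B))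
    (u : UnitG P B) : ClosureRel val₀ C u 1 u := by
  have h := ((ClosureRel.pe (C := C) u).mul
    ((ClosureRel.pe' (C := C) u).mul (ClosureRel.loop val₀ C (-u))))
  refine h.cast ?_ ?_ ?_
  · rw [stripU_neg]; abel
  · simp
  · rw [stripU_neg]; abel

end Helpers

/-- The conversion closure of a unit conversion forms an invertible category with units
as objects and conversion factors as morphisms: identities, composition, and inverses. -/
theorem convClosure_invertible_category {P B D : Type*} (val₀ : P → Ratio)
    (dim₀ : B → D →₀ ℤ) (C : Set (UnitG P B × Ratio × UnitG P B))
    (hC : IsConversion dim₀ C) :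
    (∀ u : UnitG P B, (u, (1 : Ratio), u) ∈ convClosure val₀ C) ∧
    (∀ (u v w : UnitG P B) (r s : Ratio),
      (u, r, v) ∈ convClosure val₀ C → (v, s, w) ∈ convClosure val₀ C →
      (u, r * s, w) ∈ convClosure val₀ C) ∧
    (∀ (u v : UnitG P B) (r : Ratio),
      (u, r, v) ∈ convClosure val₀ C → (v, r⁻¹, u) ∈ convClosure val₀ C) := by
  refine ⟨fun u => ClosureRel.id val₀ C u, ?_, ?_⟩
  · intro u v w r s h1 h2
    have h := (h1.mul (h2.mul (ClosureRel.id val₀ C v).inv))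
    exact h.cast (by abel) (by simp) (by abel)
  · intro u v r h
    have h' := ((ClosureRel.id val₀ C v).mul (h.inv.mul (ClosureRel.id val₀ C u)))
    exact h'.cast (by abel) (by simp) (by abel)
end

section
/- For a well-defining conversion C over a finite set B of base units, the iteration of the rewriting step rwr(C) reaches a fixed point after a number of steps bounded by |B| and independent of the input: for every evaluated unit u and every n ≥ |B|, rwr(C)^n(u) = rwr(C)^{|B|}(u), and rwr(C)(rwr(C)^{|B|}(u)) = rwr(C)^{|B|}(u). -/
open Finsupp

variable {P B D : Type*}

section AuxRwr

variable {P B : Type*}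


private lemma one_zpow_ratio (n : ℤ) : (1 : Ratio) ^ n = 1 := by
  apply Subtype.ext
  rw [Positive.coe_zpow]
  simp

/-- Membership in the domain of `xpd`, stated as used inside `xpd`. -/
private def DomP (C : Set (UnitG P B × Ratio × UnitG P B)) (b : B) : Prop :=
  ∃ rv : Ratio × UnitG P B, (deltaB P b, rv.1, rv.2) ∈ C

private lemma pvalU_deltaB (val₀ : P → Ratio) (b : B) :
    pvalU val₀ (deltaB P b) = 1 := by
  unfold pvalU deltaB
  rw [Finsupp.support_single_ne_zero _ one_ne_zero, Finset.prod_singleton,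
    Finsupp.single_eq_same]
  simp [valP, one_zpow_ratio]

private lemma rootU_deltaB (b : B) :
    rootU (deltaB P b) = Finsupp.single b (1 : ℤ) := by
  unfold rootU deltaB
  rw [Finsupp.mapDomain_single]

private lemma rwrB_of_notDom (val₀ : P → Ratio)
    (C : Set (UnitG P B × Ratio × UnitG P B)) (b : B) (h : ¬ DomP C b) :
    rwrB val₀ C b = (1, Finsupp.single b (1 : ℤ)) := by
  replace h : ¬ ∃ rv : Ratio × UnitG P B, (deltaB P b, rv.1, rv.2) ∈ C := h
  unfold rwrB xpd
  rw [dif_neg h]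
  simp [pvalU_deltaB, rootU_deltaB]

private lemma depends_of_mem_xpd (C : Set (UnitG P B × Ratio × UnitG P B))
    {b c : B} (h : DomP C b) (hc : c ∈ (rootU (xpd C b).2).support) :
    Depends C b c := by
  replace h : ∃ rv : Ratio × UnitG P B, (deltaB P b, rv.1, rv.2) ∈ C := h
  refine ⟨(xpd C b).1, (xpd C b).2, ?_, hc⟩
  unfold xpd
  rw [dif_pos h]
  exact h.choose_spec

/-- Height of a base unit: number of units strictly below it in `DepOrd`. -/
private noncomputable def htC (C : Set (UnitG P B × Ratio × UnitG P B)) (b : B) : ℕ :=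
  {c | DepOrd C b c}.ncard

private lemma htC_lt [Finite B] {C : Set (UnitG P B × Ratio × UnitG P B)}
    (hirr : ∀ b : B, ¬ DepOrd C b b) {b c : B} (h : Depends C b c) :
    htC C c < htC C b := by
  apply Set.ncard_lt_ncard _ (Set.toFinite _)
  rw [Set.ssubset_def]
  constructor
  · exact fun x hx => Relation.TransGen.trans (Relation.TransGen.single h) hx
  · intro hsub
    exact hirr c (hsub (Relation.TransGen.single h))

private lemma htC_lt_card [Finite B] {C : Set (UnitG P B × Ratio × UnitG P B)}
    (hirr : ∀ b : B, ¬ DepOrd C b b) (b : B) :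
    htC C b < Nat.card B := by
  have h : {c | DepOrd C b c} ⊂ Set.univ := by
    rw [Set.ssubset_def]
    exact ⟨Set.subset_univ _, fun hsub => hirr b (hsub (Set.mem_univ b))⟩
  have := Set.ncard_lt_ncard h (Set.toFinite _)
  rwa [Set.ncard_univ] at this

private lemma rwrStep_support (val₀ : P → Ratio)
    (C : Set (UnitG P B × Ratio × UnitG P B)) (p : Ratio × RootG B) {c : B}
    (hc : c ∈ ((rwrStep val₀ C p).2).support) :
    ∃ b ∈ p.2.support, (¬ DomP C b ∧ c = b) ∨ Depends C b c := by
  classical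
  have h1 : ((rwrStep val₀ C p).2).support ⊆
      p.2.support.biUnion fun b => (p.2 b • (rwrB val₀ C b).2).support :=
    Finsupp.support_finset_sum
  obtain ⟨b, hb, hcb⟩ := Finset.mem_biUnion.mp (h1 hc)
  have hcb' : c ∈ ((rwrB val₀ C b).2).support := Finsupp.support_smul hcb
  refine ⟨b, hb, ?_⟩
  by_cases hdom : DomP C b
  · exact Or.inr (depends_of_mem_xpd C hdom hcb')
  · left
    refine ⟨hdom, ?_⟩
    rw [rwrB_of_notDom val₀ C b hdom] at hcb'
    simpa using Finsupp.support_single_subset hcb'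

private lemma rwrStep_eq_self (val₀ : P → Ratio)
    (C : Set (UnitG P B × Ratio × UnitG P B)) (p : Ratio × RootG B)
    (h : ∀ b ∈ p.2.support, ¬ DomP C b) :
    rwrStep val₀ C p = p := by
  unfold rwrStep
  have h1 : ∏ b ∈ p.2.support, (rwrB val₀ C b).1 ^ (p.2 b) = 1 :=
    Finset.prod_eq_one fun b hb => by
      rw [rwrB_of_notDom val₀ C b (h b hb)]; exact one_zpow_ratio (p.2 b)
  have h2 : ∑ b ∈ p.2.support, p.2 b • (rwrB val₀ C b).2 = p.2 := by
    rw [Finset.sum_congr rfl fun b hb => by rw [rwrB_of_notDom val₀ C b (h b hb)]]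
    have : ∀ b ∈ p.2.support, p.2 b • (Finsupp.single b (1 : ℤ))
        = Finsupp.single b (p.2 b) := by
      intro b _
      rw [Finsupp.smul_single, smul_eq_mul, mul_one]
    rw [Finset.sum_congr rfl this]
    exact Finsupp.sum_single p.2
  rw [h1, h2, mul_one]

private lemma rwr_invariant [Finite B] (val₀ : P → Ratio)
    {C : Set (UnitG P B × Ratio × UnitG P B)}
    (hirr : ∀ b : B, ¬ DepOrd C b b) :
    ∀ (n : ℕ) (p : Ratio × RootG B),
      (∀ b ∈ p.2.support, DomP C b → htC C b < n) →
      rwrStep val₀ C ((rwrStep val₀ C)^[n] p) = (rwrStep val₀ C)^[n] p := by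
  intro n
  induction n with
  | zero =>
    intro p hp
    simp only [Function.iterate_zero, id_eq]
    exact rwrStep_eq_self val₀ C p fun b hb hdom =>
      Nat.not_lt_zero _ (hp b hb hdom)
  | succ n ih =>
    intro p hp
    rw [Function.iterate_succ_apply]
    apply ih
    intro c hc hdomc
    obtain ⟨b, hb, hcase⟩ := rwrStep_support val₀ C p hc
    rcases hcase with ⟨hnb, rfl⟩ | hdep
    · exact absurd hdomc hnb
    · have hdomb : DomP C b := by
        obtain ⟨r, v, hm, -⟩ := hdep
        exact ⟨(r, v), hm⟩
      have h1 := htC_lt hirr hdep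
      have h2 := hp b hb hdomb
      omega

end AuxRwr

/-- Iterated rewriting reaches a fixed point after at most `|B|` steps, uniformly
in the input. -/
theorem rwr_fixed_point {P B D : Type*} [Finite B] (val₀ : P → Ratio)
    (dim₀ : B → D →₀ ℤ) (C : Set (UnitG P B × Ratio × UnitG P B))
    (hC : IsConversion dim₀ C) (hdef : IsDefining C)
    (hwf : WellFounded (Function.swap (DepOrd C))) :
    ∀ p : Ratio × RootG B, ∀ n : ℕ, Nat.card B ≤ n →
      ((rwrStep val₀ C)^[n] p = (rwrStep val₀ C)^[Nat.card B] p ∧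
       rwrStep val₀ C ((rwrStep val₀ C)^[Nat.card B] p) =
         (rwrStep val₀ C)^[Nat.card B] p) := by
  have hirr : ∀ b : B, ¬ DepOrd C b b := fun b =>
    hwf.induction (C := fun x => ¬ DepOrd C x x) b fun x ih h => ih x h h
  intro p n hn
  have hfix : rwrStep val₀ C ((rwrStep val₀ C)^[Nat.card B] p)
      = (rwrStep val₀ C)^[Nat.card B] p :=
    rwr_invariant val₀ hirr (Nat.card B) p fun b _ _ => htC_lt_card hirr b
  refine ⟨?_, hfix⟩
  conv_lhs => rw [← Nat.sub_add_cancel hn]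
  rw [Function.iterate_add_apply]
  exact Function.iterate_fixed hfix (n - Nat.card B)
end
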